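/- Let H be a subgroup of G. Then G is amenable if and only if ℓ∞(G/H) is amenable and there exists a positive linear functional m on ℓ∞(G/H) with m(1) = 1 such that m(L_s x) = m(x) for all s ∈ G and x ∈ ℓ∞(G/H) (note that L_s maps ℓ∞(G/H) into itself). -/

import Mathlib

set_option linter.unusedSectionVars false

open scoped ENNReal ComplexOrder

noncomputable section

namespace QG

variable {G : Type*} [Group G]

/-- `ℓ∞(G)`: bounded complex functions on `G`. -/
abbrev Linf (G : Type*) : Type _ := lp (fun _ : G => ℂ) ∞

/-- `ℓ¹(G)`: summable complex functions on `G`. -/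
abbrev L1 (G : Type*) : Type _ := lp (fun _ : G => ℂ) 1

/-- The dual space `ℓ∞(G)*`. -/
abbrev DualLinf (G : Type*) : Type _ := StrongDual ℂ (Linf G)

lemma summable_norm (f : L1 G) : Summable fun s => ‖f s‖ := by
  have h := (lp.memℓp f).summable (by simp)
  simpa using h

lemma norm_apply_le (x : Linf G) (s : G) : ‖x s‖ ≤ ‖x‖ :=
  lp.norm_apply_le_norm ENNReal.top_ne_zero x s

/-- The constant function `1` in `ℓ∞(G)`. -/
def one' : Linf G :=
  ⟨fun _ => (1 : ℂ), memℓp_infty ⟨1, by rintro r ⟨t, rfl⟩; simp⟩⟩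

/-- Left translation: `(L_s x)(t) = x (s * t)`. -/
def Ltrans (s : G) (x : Linf G) : Linf G :=
  ⟨fun t => x (s * t),
    memℓp_infty (BddAbove.mono (by rintro r ⟨t, rfl⟩; exact ⟨s * t, rfl⟩) (lp.memℓp x).bddAbove)⟩

@[simp] lemma Ltrans_apply (s : G) (x : Linf G) (t : G) : Ltrans s x t = x (s * t) := rfl

lemma norm_Ltrans_le (s : G) (x : Linf G) : ‖Ltrans s x‖ ≤ ‖x‖ := by
  rw [lp.norm_eq_ciSup]
  exact ciSup_le fun t => norm_apply_le x (s * t)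

/-- The action `m * x` of `m ∈ ℓ∞(G)*` on `x ∈ ℓ∞(G)`: `(m*x)(s) = m (L_s x)`. -/
def starAct (m : DualLinf G) (x : Linf G) : Linf G :=
  ⟨fun s => m (Ltrans s x),
    memℓp_infty ⟨‖m‖ * ‖x‖, by
      rintro r ⟨s, rfl⟩
      calc ‖m (Ltrans s x)‖ ≤ ‖m‖ * ‖Ltrans s x‖ := m.le_opNorm _
        _ ≤ ‖m‖ * ‖x‖ :=
          mul_le_mul_of_nonneg_left (norm_Ltrans_le s x) (norm_nonneg m)⟩⟩

@[simp] lemma starAct_apply (m : DualLinf G) (x : Linf G) (s : G) :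
    starAct m x s = m (Ltrans s x) := rfl

lemma summable_mul_bound (f : L1 G) (x : Linf G) (t : G) :
    Summable fun s => ‖f s * x (s * t)‖ := by
  refine Summable.of_nonneg_of_le (fun s => norm_nonneg _) (fun s => ?_)
    ((summable_norm f).mul_right ‖x‖)
  rw [norm_mul]
  exact mul_le_mul_of_nonneg_left (norm_apply_le x (s * t)) (norm_nonneg _)

/-- The right action of `ℓ¹(G)` on `ℓ∞(G)`: `(x * f)(t) = ∑_s f s * x (s * t)`. -/
def rAct (x : Linf G) (f : L1 G) : Linf G :=
  ⟨fun t => ∑' s, f s * x (s * t),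
    memℓp_infty ⟨(∑' s, ‖f s‖) * ‖x‖, by
      rintro r ⟨t, rfl⟩
      calc ‖∑' s, f s * x (s * t)‖ ≤ ∑' s, ‖f s * x (s * t)‖ :=
            norm_tsum_le_tsum_norm (summable_mul_bound f x t)
        _ ≤ ∑' s, ‖f s‖ * ‖x‖ :=
            Summable.tsum_le_tsum (fun s => by
                rw [norm_mul]
                exact mul_le_mul_of_nonneg_left (norm_apply_le x (s * t)) (norm_nonneg _))
              (summable_mul_bound f x t) ((summable_norm f).mul_right _)
        _ = (∑' s, ‖f s‖) * ‖x‖ := tsum_mul_right⟩⟩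

@[simp] lemma rAct_apply (x : Linf G) (f : L1 G) (t : G) :
    rAct x f t = ∑' s, f s * x (s * t) := rfl

/-- The shear equivalence of `G × G`. -/
def shearEquiv (G : Type*) [Group G] : G × G ≃ G × G where
  toFun p := (p.2, p.2⁻¹ * p.1)
  invFun p := (p.1 * p.2, p.1)
  left_inv p := by simp
  right_inv p := by simp

lemma conv_prod_summable (f g : L1 G) :
    Summable fun p : G × G => ‖f p.2‖ * ‖g (p.2⁻¹ * p.1)‖ := by
  have h0 : Summable fun p : G × G => ‖f p.1‖ * ‖g p.2‖ :=
    (summable_norm f).mul_of_nonneg (summable_norm g) (fun _ => norm_nonneg _)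
      (fun _ => norm_nonneg _)
  have key : Summable ((fun p : G × G => ‖f p.1‖ * ‖g p.2‖) ∘ (shearEquiv G)) :=
    (shearEquiv G).summable_iff.mpr h0
  have heq : ((fun p : G × G => ‖f p.1‖ * ‖g p.2‖) ∘ (shearEquiv G)) =
      fun p : G × G => ‖f p.2‖ * ‖g (p.2⁻¹ * p.1)‖ := by
    funext p
    simp [shearEquiv, Function.comp]
  rwa [heq] at key

lemma conv_memℓp (f g : L1 G) : Memℓp (fun t : G => ∑' s, f s * g (s⁻¹ * t)) 1 := by
  have hp := conv_prod_summable f g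
  obtain ⟨h1, h2⟩ :=
    (summable_prod_of_nonneg (fun p => mul_nonneg (norm_nonneg _) (norm_nonneg _))).1 hp
  apply memℓp_gen
  simp only [ENNReal.toReal_one, Real.rpow_one]
  refine Summable.of_nonneg_of_le (fun t => norm_nonneg _) (fun t => ?_) h2
  calc ‖∑' s, f s * g (s⁻¹ * t)‖ ≤ ∑' s, ‖f s * g (s⁻¹ * t)‖ :=
        norm_tsum_le_tsum_norm (by simpa only [norm_mul] using h1 t)
    _ = ∑' s, ‖f s‖ * ‖g (s⁻¹ * t)‖ := tsum_congr fun s => norm_mul _ _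

/-- Convolution on `ℓ¹(G)`: `(f * g)(t) = ∑_s f s * g (s⁻¹ t)`. -/
def conv (f g : L1 G) : L1 G :=
  ⟨fun t => ∑' s, f s * g (s⁻¹ * t), conv_memℓp f g⟩

@[simp] lemma conv_apply (f g : L1 G) (t : G) : conv f g t = ∑' s, f s * g (s⁻¹ * t) := rfl

open Classical in
/-- The unit `ε = δ_e` of the convolution algebra `ℓ¹(G)`. -/
def eps : L1 G :=
  ⟨fun t => if t = 1 then 1 else 0, by
    apply memℓp_gen
    refine summable_of_ne_finset_zero (s := ({1} : Finset G)) ?_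
    intro t ht
    simp only [Finset.mem_singleton] at ht
    simp [ht]⟩

open Classical in
/-- Multiplication by the indicator function of `H`: `f · 1_H`. -/
def mulIndic (H : Subgroup G) (f : L1 G) : L1 G :=
  ⟨fun s => if s ∈ H then f s else 0, by
    apply memℓp_gen
    simp only [ENNReal.toReal_one, Real.rpow_one]
    refine Summable.of_nonneg_of_le (fun s => norm_nonneg _) (fun s => ?_) (summable_norm f)
    by_cases h : s ∈ H <;> simp [h]⟩

open Classical in
/-- The indicator function `1_H ∈ ℓ∞(G)` of a subgroup `H`. -/
def indic (H : Subgroup G) : Linf G :=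
  ⟨fun s => if s ∈ H then 1 else 0,
    memℓp_infty ⟨1, by rintro r ⟨s, rfl⟩; by_cases h : s ∈ H <;> simp [h]⟩⟩

/-- A state on `ℓ∞(G)`: unital positive functional. -/
def IsState (m : DualLinf G) : Prop :=
  m one' = 1 ∧ ∀ x : Linf G, (∀ s, 0 ≤ x s) → 0 ≤ m x

/-- `f ∈ Ann_L(m)`, i.e. `f * m = 0`. -/
def memAnnL (m : DualLinf G) (f : L1 G) : Prop :=
  ∀ x : Linf G, ∑' s, f s * m (Ltrans s x) = 0

/-- `f ∈ Inv_L(m, x₀)`, i.e. `f * m = f(x₀) · m`. -/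
def memInvLx (m : DualLinf G) (x₀ : Linf G) (f : L1 G) : Prop :=
  ∀ x : Linf G, ∑' s, f s * m (Ltrans s x) = (∑' s, f s * x₀ s) * m x

/-- `f ∈ Inv_L(m)`, i.e. `f * m = f(1) · m`. -/
def memInvL (m : DualLinf G) (f : L1 G) : Prop :=
  ∀ x : Linf G, ∑' s, f s * m (Ltrans s x) = (∑' s, f s) * m x

/-- A right idempotent state: a state with `m (m * x) = m x` for all `x`. -/
def IsRightIdempotentState (m : DualLinf G) : Prop :=
  IsState m ∧ ∀ x : Linf G, m (starAct m x) = m x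

/-- A character of `G` in `ℓ∞(G)`. -/
def IsCharacter (x : Linf G) : Prop :=
  (∀ s t : G, x (s * t) = x s * x t) ∧ ∀ s : G, ‖x s‖ = 1

/-- `ℓ∞(G/H)`, the right-`H`-invariant elements of `ℓ∞(G)`. -/
def LinfQuot (H : Subgroup G) : Set (Linf G) :=
  {x | ∀ s : G, ∀ h ∈ H, x (s * h) = x s}

/-- `J¹(G,H)`, the preannihilator of `ℓ∞(G/H)` in `ℓ¹(G)`. -/
def J1 (H : Subgroup G) : Set (L1 G) :=
  {f | ∀ x ∈ LinfQuot H, ∑' s, f s * x s = 0}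

/-- `E` witnesses relative amenability of `ℓ∞(G/H)`: a unital positive
`ℓ¹(G)`-module map `ℓ∞(G) → ℓ∞(G)` with range inside `ℓ∞(G/H)`. -/
def IsRelAmenMap (H : Subgroup G) (E : Linf G →ₗ[ℂ] Linf G) : Prop :=
  E one' = one' ∧
  (∀ x : Linf G, (∀ s, 0 ≤ x s) → ∀ s, 0 ≤ E x s) ∧
  (∀ x : Linf G, E x ∈ LinfQuot H) ∧
  (∀ (x : Linf G) (f : L1 G), E (rAct x f) = rAct (E x) f)

/-- `ℓ∞(G/H)` is relatively amenable. -/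
def RelAmen (H : Subgroup G) : Prop :=
  ∃ E : Linf G →ₗ[ℂ] Linf G, IsRelAmenMap H E

/-- `ℓ∞(G/H)` is amenable. -/
def Amen (H : Subgroup G) : Prop :=
  ∃ E : Linf G →ₗ[ℂ] Linf G, IsRelAmenMap H E ∧ ∀ x ∈ LinfQuot H, E x = x

/-- Amenability of a discrete group: existence of a left invariant mean. -/
def GroupAmenable (K : Type*) [Group K] : Prop :=
  ∃ μ : DualLinf K, IsState μ ∧ ∀ (k : K) (y : Linf K), μ (Ltrans k y) = μ y

/-- `H`-invariance of a functional on `ℓ∞(G)`. -/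
def HInvariant (H : Subgroup G) (μ : DualLinf G) : Prop :=
  ∀ h ∈ H, ∀ x : Linf G, μ (Ltrans h x) = μ x

/-- `J` has a bounded right approximate identity contained in `S`. -/
def HasBraiIn (J S : Set (L1 G)) : Prop :=
  ∃ (ι : Type) (l : Filter ι) (e : ι → L1 G), l.NeBot ∧
    (∃ C : ℝ, ∀ i, ‖e i‖ ≤ C) ∧ (∀ i, e i ∈ S) ∧
    ∀ f ∈ J, Filter.Tendsto (fun i => ‖conv f (e i) - f‖) l (nhds 0)

lemma one'_mem_LinfQuot (H : Subgroup G) : (one' : Linf G) ∈ LinfQuot H :=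
  fun _ _ _ => rfl

lemma Ltrans_mem_LinfQuot {H : Subgroup G} {x : Linf G} (hx : x ∈ LinfQuot H) (s : G) :
    Ltrans s x ∈ LinfQuot H := by
  intro t h hh
  show x (s * (t * h)) = x (s * t)
  rw [← mul_assoc]
  exact hx (s * t) h hh

/-- `ℓ∞(G/H)` as a subspace of `ℓ∞(G)`. -/
def LinfQuotSub (H : Subgroup G) : Submodule ℂ (Linf G) where
  carrier := LinfQuot H
  add_mem' := by
    intro a b ha hb s h hh
    show (a + b : Linf G) (s * h) = (a + b : Linf G) s
    rw [lp.coeFn_add]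
    simp only [Pi.add_apply]
    rw [ha s h hh, hb s h hh]
  zero_mem' := by
    intro s h hh
    show (0 : Linf G) (s * h) = (0 : Linf G) s
    rw [lp.coeFn_zero]
    simp
  smul_mem' := by
    intro c a ha s h hh
    show (c • a : Linf G) (s * h) = (c • a : Linf G) s
    rw [lp.coeFn_smul]
    simp only [Pi.smul_apply]
    rw [ha s h hh]

/-- The weak* topology on `ℓ∞(G) = ℓ¹(G)*`: the topology induced by the
pairings against elements of `ℓ¹(G)`. -/
def weakStarTop (G : Type*) [Group G] : TopologicalSpace (Linf G) :=
  TopologicalSpace.induced (fun (y : Linf G) => fun f : L1 G => ∑' s, f s * y s)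
    Pi.topologicalSpace

/-! An invariant mean `μ` on `G` yields the conditional expectation
`E x (s) = μ (g ↦ x (s η(g)))`, where `η = cosetFactor H` picks the `H`-component of `g` in a
fixed decomposition of `G` into right cosets `Hr`; since `η(h g) = h η(g)`, invariance of `μ`
under `H` makes `E x` right `H`-invariant, and `μ` restricts to an invariant state on `ℓ∞(G/H)`.
Conversely, a module map `E` commutes with left translations (these are `x ↦ x * δ_s`), so an
invariant state `m` on `ℓ∞(G/H)` pulls back to the invariant mean `m ∘ E` on `G`; positivity
alone bounds `m ∘ E` by twice the norm, through real and imaginary parts. -/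

@[simp] lemma one'_apply (g : G) : (one' : Linf G) g = 1 := rfl

lemma Ltrans_mul (s t : G) (x : Linf G) : Ltrans (s * t) x = Ltrans t (Ltrans s x) := by
  ext g
  simp [mul_assoc]

def precomp (σ : G → G) : Linf G →L[ℂ] Linf G :=
  LinearMap.mkContinuous
    { toFun := fun x => ⟨fun g => x (σ g),
        memℓp_infty ((lp.memℓp x).bddAbove.mono (by rintro r ⟨g, rfl⟩; exact ⟨σ g, rfl⟩))⟩
      map_add' := fun _ _ => rfl
      map_smul' := fun _ _ => rfl }
    1 fun x => by
      rw [one_mul]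
      exact lp.norm_le_of_forall_le (norm_nonneg x) fun g => norm_apply_le x (σ g)

@[simp] lemma precomp_apply (σ : G → G) (x : Linf G) (g : G) : precomp σ x g = x (σ g) := rfl

lemma Ltrans_eq_precomp (s : G) (x : Linf G) : Ltrans s x = precomp (s * ·) x := rfl

def starActCLM (ν : DualLinf G) : Linf G →L[ℂ] Linf G :=
  LinearMap.mkContinuous
    { toFun := starAct ν
      map_add' := fun x y => by ext s; simp [Ltrans_eq_precomp]
      map_smul' := fun c x => by ext s; simp [Ltrans_eq_precomp] }
    ‖ν‖ fun x => lp.norm_le_of_forall_le (by positivity) fun s =>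
      (ν.le_opNorm _).trans (by gcongr; exact norm_Ltrans_le s x)

@[simp] lemma starActCLM_apply (ν : DualLinf G) (x : Linf G) :
    starActCLM ν x = starAct ν x := rfl

lemma starAct_Ltrans (ν : DualLinf G) (s : G) (x : Linf G) :
    starAct ν (Ltrans s x) = Ltrans s (starAct ν x) := by
  ext t
  simp [Ltrans_mul]

lemma summable_smul_Ltrans (x : Linf G) (f : L1 G) :
    Summable fun s => f s • Ltrans s x := by
  refine Summable.of_norm_bounded ((summable_norm f).mul_right ‖x‖) fun s => ?_
  rw [norm_smul]
  gcongr
  exact norm_Ltrans_le s x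

lemma rAct_eq_tsum (x : Linf G) (f : L1 G) : rAct x f = ∑' s, f s • Ltrans s x := by
  ext t
  exact ((lp.evalCLM ℂ (fun _ : G => ℂ) ∞ t).map_tsum (summable_smul_Ltrans x f)).symm

open Classical in
lemma Ltrans_eq_rAct_single (s : G) (x : Linf G) : Ltrans s x = rAct x (lp.single 1 s 1) := by
  ext t
  rw [rAct_apply, tsum_eq_single s fun u hu => by simp [Pi.single_eq_of_ne hu]]
  simp

lemma map_rAct_of_map_Ltrans (E : Linf G →L[ℂ] Linf G)
    (hE : ∀ s x, E (Ltrans s x) = Ltrans s (E x)) (x : Linf G) (f : L1 G) :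
    E (rAct x f) = rAct (E x) f := by
  rw [rAct_eq_tsum, E.map_tsum (summable_smul_Ltrans x f), rAct_eq_tsum]
  simp only [map_smul, hE]

section ConditionalExpectation

variable {H : Subgroup G}

lemma starAct_mem_LinfQuot {ν : DualLinf G} (hν : HInvariant H ν) (x : Linf G) :
    starAct ν x ∈ LinfQuot H := by
  intro s h hh
  simp only [starAct_apply, Ltrans_mul]
  exact hν h hh _

lemma isRelAmenMap_starActCLM {ν : DualLinf G} (hν : IsState ν) (hH : HInvariant H ν) :
    IsRelAmenMap H (starActCLM ν).toLinearMap :=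
  ⟨by ext s; exact hν.1, fun x hx s => hν.2 _ fun t => hx _, starAct_mem_LinfQuot hH,
    map_rAct_of_map_Ltrans _ (starAct_Ltrans ν)⟩

variable (H) in
def cosetFactor (g : G) : G := g * (Quotient.mk (QuotientGroup.rightRel H) g).out⁻¹

lemma cosetFactor_mem (g : G) : cosetFactor H g ∈ H := by
  have h := Quotient.mk_out (s := QuotientGroup.rightRel H) g
  rwa [QuotientGroup.rightRel_apply] at h

lemma cosetFactor_mul {h : G} (hh : h ∈ H) (g : G) :
    cosetFactor H (h * g) = h * cosetFactor H g := by
  have hcoset : Quotient.mk (QuotientGroup.rightRel H) (h * g) = Quotient.mk _ g :=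
    Quotient.sound <| (QuotientGroup.rightRel_apply).2 <| by simpa using inv_mem hh
  rw [cosetFactor, cosetFactor, hcoset, mul_assoc]

variable (H) in
def restrictMean (μ : DualLinf G) : DualLinf G := μ.comp (precomp (cosetFactor H))

lemma isState_restrictMean {μ : DualLinf G} (hμ : IsState μ) : IsState (restrictMean H μ) :=
  ⟨hμ.1, fun _ hx => hμ.2 _ fun _ => hx _⟩

lemma hInvariant_restrictMean {μ : DualLinf G} (hμ : HInvariant H μ) :
    HInvariant H (restrictMean H μ) := by
  intro h hh y
  have hcomm : precomp (cosetFactor H) (Ltrans h y) = Ltrans h (precomp (cosetFactor H) y) := by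
    ext g
    simp [cosetFactor_mul hh]
  simp only [restrictMean, ContinuousLinearMap.comp_apply, hcomm, hμ h hh]

lemma restrictMean_apply_of_mem {μ : DualLinf G} (hμ1 : μ one' = 1) {y : Linf G}
    (hy : y ∈ LinfQuot H) : restrictMean H μ y = y 1 := by
  have hconst : precomp (cosetFactor H) y = y 1 • one' := by
    ext g
    simpa using hy 1 _ (cosetFactor_mem g)
  simp [restrictMean, hconst, hμ1]

lemma amen_of_isState_of_hInvariant {μ : DualLinf G} (hμ : IsState μ) (hH : HInvariant H μ) :
    Amen H := by
  refine ⟨_, isRelAmenMap_starActCLM (isState_restrictMean hμ) (hInvariant_restrictMean hH),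
    fun x hx => ?_⟩
  ext s
  simp [restrictMean_apply_of_mem hμ.1 (Ltrans_mem_LinfQuot hx s)]

end ConditionalExpectation

section PositiveFunctional

variable {φ : Linf G →ₗ[ℂ] ℂ} (hφ1 : φ one' = 1)
  (hφpos : ∀ x : Linf G, (∀ s, 0 ≤ x s) → 0 ≤ φ x)
include hφpos

lemma apply_le_apply_of_forall_le {x y : Linf G} (hxy : ∀ s, x s ≤ y s) : φ x ≤ φ y := by
  simpa using hφpos (y - x) fun s => by simpa using hxy s

include hφ1

lemma norm_apply_le_of_isSelfAdjoint {y : Linf G} (hy : IsSelfAdjoint y) : ‖φ y‖ ≤ ‖y‖ := by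
  have him : ∀ s, (y s).im = 0 := fun s => Complex.conj_eq_iff_im.1 (congrFun (congrArg (⇑) hy) s)
  have hre : ∀ s, |(y s).re| ≤ ‖y‖ := fun s => (Complex.abs_re_le_norm _).trans (norm_apply_le y s)
  have hconst (c : ℂ) (s : G) : (c • one' : Linf G) s = c := mul_one c
  have hlow : -(‖y‖ : ℂ) ≤ φ y := by
    have := apply_le_apply_of_forall_le hφpos (x := -(‖y‖ : ℂ) • one') (y := y) fun s => by
      rw [hconst, Complex.le_def]
      simpa [him] using (abs_le.1 (hre s)).1
    simpa [hφ1] using this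
  have hupp : φ y ≤ ‖y‖ := by
    have := apply_le_apply_of_forall_le hφpos (x := y) (y := (‖y‖ : ℂ) • one') fun s => by
      rw [hconst, Complex.le_def]
      simpa [him] using (abs_le.1 (hre s)).2
    simpa [hφ1] using this
  rw [Complex.le_def] at hlow hupp
  simp only [Complex.neg_re, Complex.ofReal_re, Complex.neg_im, Complex.ofReal_im] at hlow hupp
  rw [← Complex.abs_re_eq_norm.2 (by linarith), abs_le]
  exact ⟨hlow.1, hupp.1⟩

lemma norm_apply_le_two_mul (x : Linf G) : ‖φ x‖ ≤ 2 * ‖x‖ :=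
  calc ‖φ x‖ = ‖φ (realPart x) + Complex.I * φ (imaginaryPart x)‖ := by
        rw [← smul_eq_mul, ← map_smul, ← map_add, realPart_add_I_smul_imaginaryPart]
    _ ≤ ‖φ (realPart x)‖ + ‖φ (imaginaryPart x)‖ := by
        simpa using norm_add_le (φ (realPart x)) (Complex.I * φ (imaginaryPart x))
    _ ≤ ‖x‖ + ‖x‖ := add_le_add
        ((norm_apply_le_of_isSelfAdjoint hφ1 hφpos (realPart x).2).trans
          (realPart.norm_le x))
        ((norm_apply_le_of_isSelfAdjoint hφ1 hφpos (imaginaryPart x).2).trans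
          (imaginaryPart.norm_le x))
    _ = 2 * ‖x‖ := by ring

lemma exists_isState_eq : ∃ μ : DualLinf G, IsState μ ∧ ∀ x, μ x = φ x :=
  ⟨φ.mkContinuous 2 (norm_apply_le_two_mul hφ1 hφpos), ⟨hφ1, hφpos⟩, fun _ => rfl⟩

end PositiveFunctional

lemma IsRelAmenMap.map_Ltrans {H : Subgroup G} {E : Linf G →ₗ[ℂ] Linf G}
    (hE : IsRelAmenMap H E) (s : G) (x : Linf G) : E (Ltrans s x) = Ltrans s (E x) := by
  rw [Ltrans_eq_rAct_single, hE.2.2.2, ← Ltrans_eq_rAct_single]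

lemma groupAmenable_of_isRelAmenMap {H : Subgroup G} {E : Linf G →ₗ[ℂ] Linf G}
    (hE : IsRelAmenMap H E) (m : LinfQuotSub H →ₗ[ℂ] ℂ) (hm1 : m ⟨one', one'_mem_LinfQuot H⟩ = 1)
    (hmpos : ∀ x : LinfQuotSub H, (∀ s, 0 ≤ (x : Linf G) s) → 0 ≤ m x)
    (hminv : ∀ (s : G) (x : LinfQuotSub H),
      m ⟨Ltrans s (x : Linf G), Ltrans_mem_LinfQuot x.2 s⟩ = m x) :
    GroupAmenable G := by
  set E' := E.codRestrict (LinfQuotSub H) hE.2.2.1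
  have hE'1 : E' one' = ⟨one', one'_mem_LinfQuot H⟩ := Subtype.ext hE.1
  have hE'Ltrans (s : G) (x : Linf G) :
      E' (Ltrans s x) = ⟨Ltrans s (E' x : Linf G), Ltrans_mem_LinfQuot (E' x).2 s⟩ :=
    Subtype.ext (hE.map_Ltrans s x)
  obtain ⟨μ, hμ, hμE⟩ := exists_isState_eq (φ := m ∘ₗ E') (by simp [hE'1, hm1])
    fun x hx => hmpos (E' x) (hE.2.1 x hx)
  exact ⟨μ, hμ, fun s x => by simp [hμE, hE'Ltrans, hminv]⟩

/-- `G` is amenable iff `ℓ∞(G/H)` is amenable and carries a left invariant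
state. -/
theorem statement12 (H : Subgroup G) :
    GroupAmenable G ↔
      (Amen H ∧ ∃ m : LinfQuotSub H →ₗ[ℂ] ℂ,
        m ⟨one', one'_mem_LinfQuot H⟩ = 1 ∧
        (∀ x : LinfQuotSub H, (∀ s, 0 ≤ (x : Linf G) s) → 0 ≤ m x) ∧
        ∀ (s : G) (x : LinfQuotSub H),
          m ⟨Ltrans s (x : Linf G), Ltrans_mem_LinfQuot x.2 s⟩ = m x) := by
  constructor
  · rintro ⟨μ, hμ, hinv⟩
    exact ⟨amen_of_isState_of_hInvariant hμ fun h _ => hinv h,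
      μ.toLinearMap ∘ₗ (LinfQuotSub H).subtype, hμ.1, fun x hx => hμ.2 _ hx, fun s x => hinv s x⟩
  · rintro ⟨⟨E, hE, -⟩, m, hm1, hmpos, hminv⟩
    exact groupAmenable_of_isRelAmenMap hE m hm1 hmpos hminv

end QG
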